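/- Let 𝔽 ∈ {ℝ, ℂ}, set β = 1 if 𝔽 = ℝ and β = 2 if 𝔽 = ℂ, let N ≥ 2, and let x = (x₁,…,x_N) be uniformly distributed on the unit sphere of 𝔽^N (identified with the unit sphere of ℝ^{βN}). Then for every t ≥ 0, P{|x₁| ≥ t} ≤ exp(−β(N−1)t²/2). -/

import Mathlib

/-!
Let `μ` be the law of `x` and `ν` a Haar measure on `𝔽^N`. Counting the pairs `(y, w)` with
`|⟪y, w⟫| ≥ t ‖y‖ ‖w‖` by Fubini in both orders, and rotating each slice to a fixed direction,
gives `μ {|y₁| ≥ t} · ν B = ν {w ∈ B | |w₁| ≥ t ‖w‖}` for the unit ball `B`. Write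
`w = (a, v) ∈ 𝔽 × 𝔽^(N-1)` and substitute `v = √(1 - t²) v'`: the slice of the cone at fixed `v'`
is the annulus `t² ‖v'‖² ≤ |a|² ≤ 1 - ‖v'‖² + t² ‖v'‖²` in `𝔽 ≅ ℝ^β`, whose volume is at most
that of the ball `|a|² ≤ 1 - ‖v'‖²` because `r ↦ r ^ (β / 2)` is subadditive for `β ≤ 2`. Hence
the probability is at most `(1 - t²) ^ (β (N - 1) / 2) ≤ exp (-β (N - 1) t² / 2)`.
-/

open MeasureTheory

noncomputable section

variable {𝕜 : Type} [RCLike 𝕜]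

noncomputable instance {N : ℕ} : MeasurableSpace (EuclideanSpace 𝕜 (Fin N)) := borel _
instance {N : ℕ} : BorelSpace (EuclideanSpace 𝕜 (Fin N)) := ⟨rfl⟩

open Metric Module
open scoped InnerProductSpace ENNReal

theorem Real.sqrt_add_pow_le {a c : ℝ} (ha : 0 ≤ a) (hc : 0 ≤ c) {d : ℕ} (hd : d ≤ 2) :
    √(a + c) ^ d ≤ √a ^ d + √c ^ d := by
  interval_cases d
  · norm_num
  · rw [pow_one, pow_one, Real.sqrt_le_left (by positivity)]
    nlinarith [Real.sq_sqrt ha, Real.sq_sqrt hc, Real.sqrt_nonneg a, Real.sqrt_nonneg c]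
  · rw [Real.sq_sqrt ha, Real.sq_sqrt hc, Real.sq_sqrt (by positivity)]

theorem setOf_norm_sq_le_eq_closedBall {F : Type*} [SeminormedAddCommGroup F] {r : ℝ}
    (hr : 0 ≤ r) :
    {x : F | ‖x‖ ^ 2 ≤ r} = closedBall 0 √r := by
  ext x
  rw [Set.mem_ofPred_eq, mem_closedBall_zero_iff, Real.le_sqrt (norm_nonneg x) hr]

theorem setOf_le_norm_sq_eq_compl_ball {F : Type*} [SeminormedAddCommGroup F] (r : ℝ) :
    {x : F | r ≤ ‖x‖ ^ 2} = (ball 0 √r)ᶜ := by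
  ext x
  rw [Set.mem_ofPred_eq, Set.mem_compl_iff, mem_ball_zero_iff, Real.lt_sqrt (norm_nonneg x),
    not_lt]

theorem MeasureTheory.Measure.lintegral_eq_ofReal_pow_mul_lintegral_comp_smul {E : Type*}
    [NormedAddCommGroup E] [NormedSpace ℝ E] [FiniteDimensional ℝ E] [MeasurableSpace E]
    [BorelSpace E] (η : Measure E) [η.IsAddHaarMeasure] (f : E → ℝ≥0∞) {c : ℝ} (hc : 0 < c) :
    ∫⁻ v, f v ∂η = ENNReal.ofReal (c ^ finrank ℝ E) * ∫⁻ v, f (c • v) ∂η := by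
  have hη : η = ENNReal.ofReal (c ^ finrank ℝ E) • η.map (c • ·) := by
    rw [Measure.map_addHaar_smul η hc.ne', smul_smul, ← ENNReal.ofReal_mul (by positivity),
      abs_of_pos (by positivity), mul_inv_cancel₀ (by positivity), ENNReal.ofReal_one, one_smul]
  conv_lhs => rw [hη]
  rw [lintegral_smul_measure]
  exact congrArg _ (lintegral_map_equiv f (MeasurableEquiv.smul₀ c hc.ne'))

section Cap

variable {F E : Type*} [NormedAddCommGroup F] [NormedSpace ℝ F] [FiniteDimensional ℝ F]
  [MeasurableSpace F] [BorelSpace F] [Nontrivial F] (κ : Measure F) [κ.IsAddHaarMeasure]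
  [NormedAddCommGroup E] [NormedSpace ℝ E] [FiniteDimensional ℝ E]
  [MeasurableSpace E] [BorelSpace E] [Nontrivial E] (η : Measure E) [η.IsAddHaarMeasure]

theorem MeasureTheory.Measure.addHaar_annulus_le (hF : finrank ℝ F ≤ 2) (a c : ℝ) :
    κ {x | c ≤ ‖x‖ ^ 2 ∧ ‖x‖ ^ 2 ≤ a + c} ≤ κ {x | ‖x‖ ^ 2 ≤ a} := by
  rcases lt_or_ge a 0 with ha | ha
  · have : {x : F | c ≤ ‖x‖ ^ 2 ∧ ‖x‖ ^ 2 ≤ a + c} = ∅ :=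
      Set.eq_empty_of_forall_notMem fun x hx => by linarith [hx.1, hx.2]
    simp [this]
  rcases lt_or_ge c 0 with hc | hc
  · exact measure_mono fun x hx => show ‖x‖ ^ 2 ≤ a by linarith [hx.2]
  have hannulus :
      {x : F | c ≤ ‖x‖ ^ 2 ∧ ‖x‖ ^ 2 ≤ a + c} = closedBall 0 √(a + c) \ ball 0 √c := by
    rw [Set.sdiff_eq, ← setOf_norm_sq_le_eq_closedBall (by positivity),
      ← setOf_le_norm_sq_eq_compl_ball, Set.ofPred_and, Set.inter_comm]
  rw [hannulus, setOf_norm_sq_le_eq_closedBall ha,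
    measure_sdiff (ball_subset_closedBall.trans (closedBall_subset_closedBall
      (Real.sqrt_le_sqrt (by linarith)))) measurableSet_ball.nullMeasurableSet
      measure_ball_lt_top.ne,
    tsub_le_iff_right, Measure.addHaar_closedBall κ _ (Real.sqrt_nonneg _),
    Measure.addHaar_closedBall κ _ (Real.sqrt_nonneg _),
    Measure.addHaar_ball κ _ (Real.sqrt_nonneg _),
    ← add_mul, ← ENNReal.ofReal_add (by positivity) (by positivity)]
  gcongr
  exact Real.sqrt_add_pow_le ha hc hF

theorem MeasureTheory.Measure.addHaar_prod_cap_le (hF : finrank ℝ F ≤ 2) (s : ℝ) :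
    (κ.prod η) {p : F × E | ‖p.1‖ ^ 2 + ‖p.2‖ ^ 2 ≤ 1 ∧ s * (‖p.1‖ ^ 2 + ‖p.2‖ ^ 2) ≤ ‖p.1‖ ^ 2}
      ≤ ENNReal.ofReal (√(1 - s) ^ finrank ℝ E) *
        (κ.prod η) {p : F × E | ‖p.1‖ ^ 2 + ‖p.2‖ ^ 2 ≤ 1} := by
  rcases le_or_gt 1 s with hs | hs
  · have hsub : {p : F × E | ‖p.1‖ ^ 2 + ‖p.2‖ ^ 2 ≤ 1 ∧ s * (‖p.1‖ ^ 2 + ‖p.2‖ ^ 2) ≤ ‖p.1‖ ^ 2}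
        ⊆ Set.univ ×ˢ {0} := by
      rintro ⟨a, v⟩ ⟨-, h⟩
      have hv : ‖v‖ ^ 2 ≤ 0 := by nlinarith [sq_nonneg ‖a‖, sq_nonneg ‖v‖]
      simpa using hv
    refine (measure_mono hsub).trans ?_
    simp [Measure.prod_prod]
  have hnormsq : Continuous fun p : F × E => ‖p.1‖ ^ 2 + ‖p.2‖ ^ 2 := by fun_prop
  have hball : MeasurableSet {p : F × E | ‖p.1‖ ^ 2 + ‖p.2‖ ^ 2 ≤ 1} :=
    (isClosed_le hnormsq continuous_const).measurableSet
  have hcap : MeasurableSet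
      {p : F × E | ‖p.1‖ ^ 2 + ‖p.2‖ ^ 2 ≤ 1 ∧ s * (‖p.1‖ ^ 2 + ‖p.2‖ ^ 2) ≤ ‖p.1‖ ^ 2} :=
    hball.inter (isClosed_le (continuous_const.mul hnormsq) (by fun_prop)).measurableSet
  rw [Measure.prod_apply_symm hcap, Measure.prod_apply_symm hball,
    Measure.lintegral_eq_ofReal_pow_mul_lintegral_comp_smul η _ (Real.sqrt_pos.2 (sub_pos.2 hs))]
  refine mul_le_mul_right (lintegral_mono fun v => ?_) _
  have hnorm : ‖√(1 - s) • v‖ ^ 2 = (1 - s) * ‖v‖ ^ 2 := by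
    rw [norm_smul, mul_pow, Real.norm_eq_abs, sq_abs, Real.sq_sqrt (sub_pos.2 hs).le]
  calc κ _ ≤ κ {a | s * ‖v‖ ^ 2 ≤ ‖a‖ ^ 2 ∧ ‖a‖ ^ 2 ≤ (1 - ‖v‖ ^ 2) + s * ‖v‖ ^ 2} := by
        refine measure_mono fun a ⟨h1, h2⟩ => ?_
        simp only [Set.mem_ofPred_eq, hnorm] at h1 h2 ⊢
        constructor
        · nlinarith [sq_nonneg ‖a‖, sq_nonneg ‖v‖]
        · linarith
    _ ≤ κ {a | ‖a‖ ^ 2 ≤ 1 - ‖v‖ ^ 2} := Measure.addHaar_annulus_le κ hF _ _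
    _ = κ _ := by
        congr 1
        ext a
        simp only [Set.mem_preimage, Set.mem_ofPred_eq, le_sub_iff_add_le]

end Cap

theorem MeasureTheory.Measure.addHaar_preimage_linearIsometryEquiv {E : Type*}
    [NormedAddCommGroup E] [NormedSpace ℝ E] [FiniteDimensional ℝ E] [MeasurableSpace E]
    [BorelSpace E]
    (μ : Measure E) [μ.IsAddHaarMeasure] (g : E ≃ₗᵢ[ℝ] E) (s : Set E) :
    μ (g ⁻¹' s) = μ s := by
  have hdet : LinearMap.det (g.toLinearEquiv : E →ₗ[ℝ] E) ≠ 0 :=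
    (LinearEquiv.isUnit_det' g.toLinearEquiv).ne_zero
  have hscale := Measure.addHaar_preimage_linearMap μ hdet
  -- the factor is one since `g` maps the unit ball, of positive finite measure, onto itself
  have hone : ENNReal.ofReal |(LinearMap.det (g.toLinearEquiv : E →ₗ[ℝ] E))⁻¹| = 1 := by
    have hball := hscale (ball 0 1)
    rw [show ⇑(g.toLinearEquiv : E →ₗ[ℝ] E) ⁻¹' ball 0 1 = ball 0 1 by simp] at hball
    exact (ENNReal.mul_eq_right (measure_ball_pos μ 0 one_pos).ne' measure_ball_lt_top.ne).1
      hball.symm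
  exact (hscale s).trans (by rw [hone, one_mul])

section Invariant

variable {V : Type*} [NormedAddCommGroup V] [InnerProductSpace 𝕜 V]
  [MeasurableSpace V] [BorelSpace V]

variable (𝕜) in
def IsIsometryInvariant (μ : Measure V) : Prop := ∀ g : V ≃ₗᵢ[𝕜] V, μ.map g = μ

theorem IsIsometryInvariant.measure_preimage {μ : Measure V} (hμ : IsIsometryInvariant 𝕜 μ)
    (g : V ≃ₗᵢ[𝕜] V) (s : Set V) : μ (g ⁻¹' s) = μ s := by
  conv_rhs => rw [← hμ g]
  exact (g.toHomeomorph.toMeasurableEquiv.map_apply s).symm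

theorem IsIsometryInvariant.restrict_closedBall {μ : Measure V} (hμ : IsIsometryInvariant 𝕜 μ)
    (r : ℝ) : IsIsometryInvariant 𝕜 (μ.restrict (closedBall 0 r)) := by
  intro g
  ext s hs
  rw [Measure.map_apply g.continuous.measurable hs,
    Measure.restrict_apply' measurableSet_closedBall,
    Measure.restrict_apply' measurableSet_closedBall, ← hμ.measure_preimage g (s ∩ _),
    Set.preimage_inter, g.preimage_closedBall, map_zero]

theorem isIsometryInvariant_addHaar [FiniteDimensional 𝕜 V] [NormedSpace ℝ V]
    [IsScalarTower ℝ 𝕜 V] (μ : Measure V) [μ.IsAddHaarMeasure] : IsIsometryInvariant 𝕜 μ :=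
  have : FiniteDimensional ℝ V := .trans ℝ 𝕜 V
  fun g => Measure.ext fun s hs => by
    rw [Measure.map_apply g.continuous.measurable hs]
    exact Measure.addHaar_preimage_linearIsometryEquiv μ
      { g.toLinearEquiv.restrictScalars ℝ with norm_map' := g.norm_map } s

end Invariant

section Rotation

variable {V : Type*} [NormedAddCommGroup V] [InnerProductSpace 𝕜 V]
  [FiniteDimensional 𝕜 V]

theorem exists_orthonormalBasis_apply_eq {u : V} (hu : ‖u‖ = 1) (i : Fin (finrank 𝕜 V)) :
    ∃ b : OrthonormalBasis (Fin (finrank 𝕜 V)) 𝕜 V, b i = u := by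
  have hu' : Orthonormal 𝕜 (({i} : Set (Fin (finrank 𝕜 V))).domRestrict fun _ => u) :=
    ⟨fun _ => hu, fun j k hjk => absurd (Subsingleton.elim j k) hjk⟩
  obtain ⟨b, hb⟩ := hu'.exists_orthonormalBasis_extension_of_card_eq (by simp)
  exact ⟨b, hb i rfl⟩

theorem exists_linearIsometryEquiv_apply_eq {u e : V} (hu : ‖u‖ = 1) (he : ‖e‖ = 1) :
    ∃ g : V ≃ₗᵢ[𝕜] V, g u = e := by
  have : Nontrivial V := ⟨⟨u, 0, fun h => by simp [h] at hu⟩⟩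
  let i : Fin (finrank 𝕜 V) := ⟨0, finrank_pos⟩
  obtain ⟨bu, hbu⟩ := exists_orthonormalBasis_apply_eq hu i
  obtain ⟨be, hbe⟩ := exists_orthonormalBasis_apply_eq he i
  refine ⟨bu.repr.trans be.repr.symm, ?_⟩
  rw [LinearIsometryEquiv.trans_apply, ← hbu, OrthonormalBasis.repr_self,
    OrthonormalBasis.repr_symm_single, hbe]

variable [MeasurableSpace V] [BorelSpace V]

theorem IsIsometryInvariant.measure_cone_eq {μ : Measure V} (hμ : IsIsometryInvariant 𝕜 μ)
    {z e : V} (hz : z ≠ 0) (he : ‖e‖ = 1) (t : ℝ) :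
    μ {w | t * ‖z‖ * ‖w‖ ≤ ‖⟪z, w⟫_𝕜‖} = μ {w | t * ‖w‖ ≤ ‖⟪e, w⟫_𝕜‖} := by
  obtain ⟨g, hg⟩ :=
    exists_linearIsometryEquiv_apply_eq (𝕜 := 𝕜) (norm_smul_inv_norm (𝕜 := 𝕜) hz) he
  rw [← hμ.measure_preimage g {w | t * ‖w‖ ≤ ‖⟪e, w⟫_𝕜‖}]
  congr 1
  ext w
  have hinner : ‖⟪e, g w⟫_𝕜‖ = ‖z‖⁻¹ * ‖⟪z, w⟫_𝕜‖ := by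
    rw [← hg, g.inner_map_map, inner_smul_left, norm_mul, RCLike.norm_conj, norm_inv,
      RCLike.norm_ofReal, abs_norm]
  simp only [Set.mem_ofPred_eq, Set.mem_preimage, g.norm_map, hinner,
    le_inv_mul_iff₀ (norm_pos_iff.2 hz), mul_assoc, mul_left_comm ‖z‖ t]

theorem IsIsometryInvariant.measure_cone_mul_eq {μ ν : Measure V} [SFinite μ] [SFinite ν]
    (hμ : IsIsometryInvariant 𝕜 μ) (hν : IsIsometryInvariant 𝕜 ν) (hμ0 : μ {0} = 0)
    (hν0 : ν {0} = 0) {e : V} (he : ‖e‖ = 1) (t : ℝ) :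
    μ {w | t * ‖w‖ ≤ ‖⟪e, w⟫_𝕜‖} * ν Set.univ = ν {w | t * ‖w‖ ≤ ‖⟪e, w⟫_𝕜‖} * μ Set.univ := by
  have : ProperSpace V := FiniteDimensional.proper_rclike 𝕜 V
  let A : Set (V × V) := {p | t * ‖p.1‖ * ‖p.2‖ ≤ ‖⟪p.1, p.2⟫_𝕜‖}
  have hA : MeasurableSet A :=
    (isClosed_le (by fun_prop) (continuous_inner.comp (by fun_prop)).norm).measurableSet
  have hfst : (μ.prod ν) A = ν {w | t * ‖w‖ ≤ ‖⟪e, w⟫_𝕜‖} * μ Set.univ := by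
    rw [Measure.prod_apply hA, ← lintegral_const]
    refine lintegral_congr_ae ?_
    filter_upwards [measure_eq_zero_iff_ae_notMem.1 hμ0] with y hy
    exact hν.measure_cone_eq hy he t
  have hsnd : (μ.prod ν) A = μ {w | t * ‖w‖ ≤ ‖⟪e, w⟫_𝕜‖} * ν Set.univ := by
    rw [Measure.prod_apply_symm hA, ← lintegral_const]
    refine lintegral_congr_ae ?_
    filter_upwards [measure_eq_zero_iff_ae_notMem.1 hν0] with w hw
    rw [← hμ.measure_cone_eq hw he t]
    congr 1
    ext y
    simp only [A, Set.mem_preimage, Set.mem_ofPred_eq, mul_right_comm t, norm_inner_symm y]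
  exact hsnd.symm.trans hfst

theorem IsIsometryInvariant.measure_cone_mul_addHaar_closedBall [NormedSpace ℝ V]
    [IsScalarTower ℝ 𝕜 V] {μ : Measure V} [IsProbabilityMeasure μ] (hμ : IsIsometryInvariant 𝕜 μ)
    (hμ0 : μ {0} = 0) (ν : Measure V) [ν.IsAddHaarMeasure] {e : V} (he : ‖e‖ = 1) (t : ℝ) :
    μ {w | t * ‖w‖ ≤ ‖⟪e, w⟫_𝕜‖} * ν (closedBall 0 1) =
      ν ({w | t * ‖w‖ ≤ ‖⟪e, w⟫_𝕜‖} ∩ closedBall 0 1) := by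
  have : FiniteDimensional ℝ V := .trans ℝ 𝕜 V
  have : Nontrivial V := ⟨⟨e, 0, by rintro rfl; simp at he⟩⟩
  have h := hμ.measure_cone_mul_eq ((isIsometryInvariant_addHaar ν).restrict_closedBall 1) hμ0
    (nonpos_iff_eq_zero.1 ((Measure.restrict_apply_le _ _).trans (measure_singleton 0).le)) he t
  rwa [Measure.restrict_apply_univ, Measure.restrict_apply' measurableSet_closedBall, measure_univ,
    mul_one] at h

end Rotation

namespace EuclideanSpace

variable (𝕜) in
def consEquiv (n : ℕ) : (𝕜 × EuclideanSpace 𝕜 (Fin n)) ≃L[𝕜] EuclideanSpace 𝕜 (Fin (n + 1)) :=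
  ((ContinuousLinearEquiv.refl 𝕜 𝕜).prodCongr (EuclideanSpace.equiv (Fin n) 𝕜)).trans
    ((Fin.consEquivL 𝕜 fun _ => 𝕜).trans (EuclideanSpace.equiv (Fin (n + 1)) 𝕜).symm)

theorem consEquiv_apply_zero {n : ℕ} (p : 𝕜 × EuclideanSpace 𝕜 (Fin n)) :
    consEquiv 𝕜 n p 0 = p.1 :=
  rfl

theorem norm_consEquiv_sq {n : ℕ} (p : 𝕜 × EuclideanSpace 𝕜 (Fin n)) :
    ‖consEquiv 𝕜 n p‖ ^ 2 = ‖p.1‖ ^ 2 + ‖p.2‖ ^ 2 := by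
  simp only [EuclideanSpace.norm_sq_eq, Fin.sum_univ_succ]
  rfl

theorem finrank_real (ι : Type*) [Fintype ι] :
    finrank ℝ (EuclideanSpace 𝕜 ι) = finrank ℝ 𝕜 * Fintype.card ι := by
  rw [← Module.finrank_mul_finrank ℝ 𝕜, finrank_euclideanSpace]

theorem addHaar_cone_inter_closedBall_le [MeasurableSpace 𝕜] [BorelSpace 𝕜] {n : ℕ} (hn : 0 < n)
    (ν : Measure (EuclideanSpace 𝕜 (Fin (n + 1)))) [ν.IsAddHaarMeasure] {t : ℝ} (ht : 0 ≤ t) :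
    ν ({w | t * ‖w‖ ≤ ‖w 0‖} ∩ closedBall 0 1) ≤
      ENNReal.ofReal (√(1 - t ^ 2) ^ (finrank ℝ 𝕜 * n)) * ν (closedBall 0 1) := by
  have : Nontrivial (EuclideanSpace 𝕜 (Fin n)) := by
    have : Nonempty (Fin n) := ⟨⟨0, hn⟩⟩
    infer_instance
  let ρ : Measure (𝕜 × EuclideanSpace 𝕜 (Fin n)) := Measure.addHaar.prod Measure.addHaar
  have hν := Measure.isAddLeftInvariant_eq_smul ν (ρ.map (consEquiv 𝕜 n))
  have hball : consEquiv 𝕜 n ⁻¹' closedBall 0 1 = {p | ‖p.1‖ ^ 2 + ‖p.2‖ ^ 2 ≤ 1} := by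
    ext p
    rw [Set.mem_preimage, mem_closedBall_zero_iff, Set.mem_ofPred_eq, ← norm_consEquiv_sq,
      sq_le_one_iff₀ (norm_nonneg _)]
  have hcone : consEquiv 𝕜 n ⁻¹' ({w | t * ‖w‖ ≤ ‖w 0‖} ∩ closedBall 0 1) ⊆
      {p | ‖p.1‖ ^ 2 + ‖p.2‖ ^ 2 ≤ 1 ∧ t ^ 2 * (‖p.1‖ ^ 2 + ‖p.2‖ ^ 2) ≤ ‖p.1‖ ^ 2} := by
    rw [Set.preimage_inter, hball]
    rintro p ⟨hp, hp1⟩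
    refine ⟨hp1, ?_⟩
    rw [← norm_consEquiv_sq, ← mul_pow, ← consEquiv_apply_zero p]
    exact pow_le_pow_left₀ (by positivity) hp 2
  have hmeas :
      MeasurableSet ({w : EuclideanSpace 𝕜 (Fin (n + 1)) | t * ‖w‖ ≤ ‖w 0‖} ∩ closedBall 0 1) :=
    (isClosed_le (by fun_prop) (by fun_prop)).measurableSet.inter measurableSet_closedBall
  rw [hν, Measure.smul_apply, Measure.smul_apply, Measure.map_apply (by fun_prop) hmeas,
    Measure.map_apply (by fun_prop) measurableSet_closedBall, hball, ENNReal.smul_def,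
    ENNReal.smul_def, smul_eq_mul, smul_eq_mul, mul_left_comm]
  gcongr
  refine (measure_mono hcone).trans ?_
  have hcap := Measure.addHaar_prod_cap_le (Measure.addHaar : Measure 𝕜)
    (Measure.addHaar : Measure (EuclideanSpace 𝕜 (Fin n))) (RCLike.finrank_le_two 𝕜) (t ^ 2)
  rwa [finrank_real, Fintype.card_fin] at hcap

end EuclideanSpace

theorem Real.sqrt_one_sub_sq_pow_le_exp (t : ℝ) (K : ℕ) :
    √(1 - t ^ 2) ^ K ≤ Real.exp (-K * t ^ 2 / 2) := by
  have h : √(1 - t ^ 2) ≤ Real.exp (-t ^ 2 / 2) := by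
    rw [Real.exp_half]
    exact Real.sqrt_le_sqrt (by linarith [Real.add_one_le_exp (-t ^ 2)])
  calc √(1 - t ^ 2) ^ K ≤ Real.exp (-t ^ 2 / 2) ^ K := pow_le_pow_left₀ (Real.sqrt_nonneg _) h K
    _ = Real.exp (-K * t ^ 2 / 2) := by rw [← Real.exp_nat_mul]; ring_nf

/-- Lemma 2 of the paper; concentration of measure on spheres: if `x` is
uniformly distributed on the unit sphere of `𝔽^N` (with `𝔽 ∈ {ℝ, ℂ}` and `β = dim_ℝ 𝔽`,
uniformity being characterised by invariance under all linear isometries), then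
`ℙ(|x₁| ≥ t) ≤ exp(-β(N-1)t²/2)` for all `t ≥ 0`. -/
theorem sphere_first_coordinate_concentration
    {𝕜 : Type} [RCLike 𝕜] {N : ℕ} (hN : 2 ≤ N)
    {Ω : Type} [MeasurableSpace Ω] (ℙ : Measure Ω) [IsProbabilityMeasure ℙ]
    (x : Ω → EuclideanSpace 𝕜 (Fin N)) (hmeas : Measurable x)
    (hsphere : ∀ ω, ‖x ω‖ = 1)
    (hinv : ∀ g : EuclideanSpace 𝕜 (Fin N) ≃ₗᵢ[𝕜] EuclideanSpace 𝕜 (Fin N),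
      Measure.map (fun ω => g (x ω)) ℙ = Measure.map x ℙ)
    (t : ℝ) (ht : 0 ≤ t) :
    ℙ {ω | t ≤ ‖x ω (⟨0, by omega⟩ : Fin N)‖} ≤
      ENNReal.ofReal (Real.exp (-(Module.finrank ℝ 𝕜 : ℝ) * ((N : ℝ) - 1) * t ^ 2 / 2)) := by
  obtain ⟨M, rfl⟩ : ∃ M, N = M + 1 := ⟨N - 1, by omega⟩
  borelize 𝕜
  let μ := ℙ.map x
  let ν : Measure (EuclideanSpace 𝕜 (Fin (M + 1))) := Measure.addHaar
  have : IsProbabilityMeasure μ := Measure.isProbabilityMeasure_map hmeas.aemeasurable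
  have hμ : IsIsometryInvariant 𝕜 μ := fun g => by
    rw [Measure.map_map g.continuous.measurable hmeas]
    exact hinv g
  have hμ0 : μ {0} = 0 := by
    rw [Measure.map_apply hmeas (measurableSet_singleton 0),
      Set.eq_empty_of_forall_notMem (s := x ⁻¹' {0}) fun ω h => by
        simpa [show x ω = 0 from h] using hsphere ω,
      measure_empty]
  have hdc := hμ.measure_cone_mul_addHaar_closedBall hμ0 ν (e := EuclideanSpace.single 0 1)
    (by simp) t
  simp only [EuclideanSpace.inner_single_left, map_one, one_mul] at hdc
  have hP : ℙ {ω | t ≤ ‖x ω (⟨0, by omega⟩ : Fin (M + 1))‖} = μ {w | t * ‖w‖ ≤ ‖w 0‖} := by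
    rw [Measure.map_apply hmeas (isClosed_le (by fun_prop) (by fun_prop)).measurableSet]
    simp [hsphere]
  rw [hP]
  calc μ _ ≤ ENNReal.ofReal (√(1 - t ^ 2) ^ (finrank ℝ 𝕜 * M)) := by
        rw [← ENNReal.mul_le_mul_iff_left (measure_closedBall_pos ν 0 one_pos).ne'
          measure_closedBall_lt_top.ne, hdc]
        exact EuclideanSpace.addHaar_cone_inter_closedBall_le (by omega) ν ht
    _ ≤ _ := by
        gcongr
        convert Real.sqrt_one_sub_sq_pow_le_exp t (finrank ℝ 𝕜 * M) using 2
        push_cast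
        ring
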